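/- Let A = ℂ⟨x, y⟩/(x² − y²). Then the family of elements (y·x)^i · y^j for i, j ≥ 0, together with the elements x·(y·x)^i · y^j for i, j ≥ 0, forms a ℂ-vector-space basis of A. -/
import Mathlib

/-- The defining relation `x² = y²` of `A = ℂ⟨x, y⟩/(x² − y²)`. -/
inductive MinusRel : FreeAlgebra ℂ (Fin 2) → FreeAlgebra ℂ (Fin 2) → Prop
  | rel : MinusRel (FreeAlgebra.ι ℂ (0 : Fin 2) * FreeAlgebra.ι ℂ (0 : Fin 2))
      (FreeAlgebra.ι ℂ (1 : Fin 2) * FreeAlgebra.ι ℂ (1 : Fin 2))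

/-- The algebra `A = ℂ⟨x, y⟩/(x² − y²)`. -/
abbrev MinusAlg : Type := RingQuot MinusRel

/-- The image of `x` in `A = ℂ⟨x, y⟩/(x² − y²)`. -/
noncomputable def mX : MinusAlg := RingQuot.mkAlgHom ℂ MinusRel (FreeAlgebra.ι ℂ (0 : Fin 2))

/-- The image of `y` in `A = ℂ⟨x, y⟩/(x² − y²)`. -/
noncomputable def mY : MinusAlg := RingQuot.mkAlgHom ℂ MinusRel (FreeAlgebra.ι ℂ (1 : Fin 2))

/-- The family `(yx)^i y^j` (left component) and `x (yx)^i y^j` (right component). -/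
noncomputable def mBasisFam : (ℕ × ℕ) ⊕ (ℕ × ℕ) → MinusAlg
  | Sum.inl (i, j) => (mY * mX) ^ i * mY ^ j
  | Sum.inr (i, j) => mX * ((mY * mX) ^ i * mY ^ j)

/- ### Auxiliary setup: a representation on the free module over normal forms -/

abbrev MIdx := (ℕ × ℕ) ⊕ (ℕ × ℕ)
abbrev MV := MIdx →₀ ℂ

def mfX : MIdx → MIdx
  | Sum.inl (i, j) => Sum.inr (i, j)
  | Sum.inr (i, j) => Sum.inl (i, j + 2)

def mfY : MIdx → MIdx
  | Sum.inl (0, j) => Sum.inl (0, j + 1)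
  | Sum.inl (i + 1, j) => Sum.inr (i, j + 2)
  | Sum.inr (i, j) => Sum.inl (i + 1, j)

lemma mf_sq : ∀ k, mfX (mfX k) = mfY (mfY k) := by
  rintro (⟨(_ | i), j⟩ | ⟨i, j⟩) <;> rfl

noncomputable def mLX : Module.End ℂ MV := Finsupp.lmapDomain ℂ ℂ mfX
noncomputable def mLY : Module.End ℂ MV := Finsupp.lmapDomain ℂ ℂ mfY

@[simp] lemma mLX_single (k : MIdx) (c : ℂ) :
    mLX (Finsupp.single k c) = Finsupp.single (mfX k) c := Finsupp.mapDomain_single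

@[simp] lemma mLY_single (k : MIdx) (c : ℂ) :
    mLY (Finsupp.single k c) = Finsupp.single (mfY k) c := Finsupp.mapDomain_single

noncomputable def mGen : Fin 2 → Module.End ℂ MV := ![mLX, mLY]

noncomputable def mρfree : FreeAlgebra ℂ (Fin 2) →ₐ[ℂ] Module.End ℂ MV :=
  FreeAlgebra.lift ℂ mGen

lemma mρfree_rel : ∀ ⦃a b⦄, MinusRel a b → mρfree a = mρfree b := by
  rintro _ _ ⟨⟩
  simp only [map_mul, mρfree, FreeAlgebra.lift_ι_apply]
  show mGen 0 * mGen 0 = mGen 1 * mGen 1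
  have h0 : mGen 0 = mLX := rfl
  have h1 : mGen 1 = mLY := rfl
  rw [h0, h1]
  apply Finsupp.lhom_ext
  intro a b
  show mLX (mLX _) = mLY (mLY _)
  simp [mf_sq a]

noncomputable def mρ : MinusAlg →ₐ[ℂ] Module.End ℂ MV :=
  RingQuot.liftAlgHom ℂ ⟨mρfree, mρfree_rel⟩

lemma mρ_mX : mρ mX = mLX := by
  show RingQuot.liftAlgHom ℂ ⟨mρfree, mρfree_rel⟩
      (RingQuot.mkAlgHom ℂ MinusRel (FreeAlgebra.ι ℂ (0 : Fin 2))) = mLX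
  rw [RingQuot.liftAlgHom_mkAlgHom_apply]
  show FreeAlgebra.lift ℂ mGen (FreeAlgebra.ι ℂ (0 : Fin 2)) = mLX
  rw [FreeAlgebra.lift_ι_apply]
  rfl

lemma mρ_mY : mρ mY = mLY := by
  show RingQuot.liftAlgHom ℂ ⟨mρfree, mρfree_rel⟩
      (RingQuot.mkAlgHom ℂ MinusRel (FreeAlgebra.ι ℂ (1 : Fin 2))) = mLY
  rw [RingQuot.liftAlgHom_mkAlgHom_apply]
  show FreeAlgebra.lift ℂ mGen (FreeAlgebra.ι ℂ (1 : Fin 2)) = mLY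
  rw [FreeAlgebra.lift_ι_apply]
  rfl

noncomputable def me₀ : MV := Finsupp.single (Sum.inl (0, 0)) 1

lemma mLY_pow (j : ℕ) : (mLY ^ j) me₀ = Finsupp.single (Sum.inl (0, j)) 1 := by
  induction j with
  | zero => rfl
  | succ n ih =>
    rw [pow_succ', Module.End.mul_apply, ih, mLY_single]
    rfl

lemma mYX_pow (i : ℕ) : ∀ i' j, ((mLY * mLX) ^ i) (Finsupp.single (Sum.inl (i', j)) 1) =
    Finsupp.single (Sum.inl (i' + i, j)) 1 := by
  induction i with
  | zero => intro i' j; simp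
  | succ n ih =>
    intro i' j
    rw [pow_succ, Module.End.mul_apply, Module.End.mul_apply, mLX_single]
    show ((mLY * mLX) ^ n) (mLY (Finsupp.single (Sum.inr (i', j)) 1)) = _
    rw [mLY_single]
    show ((mLY * mLX) ^ n) (Finsupp.single (Sum.inl (i' + 1, j)) 1) = _
    rw [ih, show i' + 1 + n = i' + (n + 1) from by omega]

lemma mρ_basis (k : MIdx) : (mρ (mBasisFam k)) me₀ = Finsupp.single k 1 := by
  have hl : ∀ i j : ℕ, (mρ ((mY * mX) ^ i * mY ^ j)) me₀ =
      Finsupp.single (Sum.inl (i, j)) 1 := by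
    intro i j
    rw [map_mul, map_pow, map_pow, map_mul, mρ_mX, mρ_mY, Module.End.mul_apply,
      mLY_pow, mYX_pow]
    simp
  rcases k with ⟨i, j⟩ | ⟨i, j⟩
  · exact hl i j
  · show (mρ (mX * ((mY * mX) ^ i * mY ^ j))) me₀ = _
    rw [map_mul, Module.End.mul_apply, hl, mρ_mX, mLX_single]
    rfl

/- ### Algebraic identities in `MinusAlg` -/

lemma m_rel : mX * mX = mY * mY := by
  have := RingQuot.mkAlgHom_rel ℂ MinusRel.rel
  simpa [map_mul, mX, mY] using this

lemma hB (c : MinusAlg) : mX * (mX * c) = mY * (mY * c) := by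
  rw [← mul_assoc, ← mul_assoc, m_rel]

lemma hA : mY * (mY * mX) = mX * (mY * mY) := by
  rw [← mul_assoc, ← m_rel, mul_assoc]

lemma hA' (c : MinusAlg) : mY * (mY * (mX * c)) = mX * (mY * (mY * c)) := by
  calc mY * (mY * (mX * c)) = (mY * (mY * mX)) * c := by simp only [mul_assoc]
    _ = (mX * (mY * mY)) * c := by rw [hA]
    _ = mX * (mY * (mY * c)) := by simp only [mul_assoc]

lemma m_commPow (i : ℕ) : mY * (mY * (mY * mX) ^ i) = (mY * mX) ^ i * (mY * mY) := by
  induction i with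
  | zero => simp
  | succ n ih =>
    rw [pow_succ']
    simp only [mul_assoc]
    rw [hA', ih]

lemma hC (i j : ℕ) : mY * (mY * ((mY * mX) ^ i * mY ^ j)) = (mY * mX) ^ i * mY ^ (j + 2) := by
  calc mY * (mY * ((mY * mX) ^ i * mY ^ j))
      = (mY * (mY * (mY * mX) ^ i)) * mY ^ j := by simp only [mul_assoc]
    _ = ((mY * mX) ^ i * (mY * mY)) * mY ^ j := by rw [m_commPow]
    _ = (mY * mX) ^ i * mY ^ (j + 2) := by
        rw [mul_assoc, mul_assoc, ← pow_succ', ← pow_succ']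

lemma mX_basis (k : MIdx) : mX * mBasisFam k = mBasisFam (mfX k) := by
  rcases k with ⟨i, j⟩ | ⟨i, j⟩
  · rfl
  · show mX * (mX * ((mY * mX) ^ i * mY ^ j)) = (mY * mX) ^ i * mY ^ (j + 2)
    rw [hB, hC]

lemma mY_basis (k : MIdx) : mY * mBasisFam k = mBasisFam (mfY k) := by
  rcases k with ⟨(_ | i), j⟩ | ⟨i, j⟩
  · show mY * ((mY * mX) ^ 0 * mY ^ j) = (mY * mX) ^ 0 * mY ^ (j + 1)
    simp only [pow_zero, one_mul]
    rw [← pow_succ']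
  · show mY * ((mY * mX) ^ (i + 1) * mY ^ j) = mX * ((mY * mX) ^ i * mY ^ (j + 2))
    rw [pow_succ']
    simp only [mul_assoc]
    rw [hA', hC]
  · show mY * (mX * ((mY * mX) ^ i * mY ^ j)) = (mY * mX) ^ (i + 1) * mY ^ j
    rw [pow_succ']
    simp only [mul_assoc]

theorem stmt15 :
    LinearIndependent ℂ mBasisFam ∧
      Submodule.span ℂ (Set.range mBasisFam) = (⊤ : Submodule ℂ MinusAlg) := by
  constructor
  · -- linear independence via the representation mρ
    have hsing : LinearIndependent ℂ (fun k : MIdx => Finsupp.single k (1 : ℂ)) :=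
      Finsupp.basisSingleOne.linearIndependent
    let φ : MinusAlg →ₗ[ℂ] MV :=
      (LinearMap.applyₗ me₀).comp mρ.toLinearMap
    apply LinearIndependent.of_comp φ
    have : (φ ∘ mBasisFam) = fun k : MIdx => Finsupp.single k (1 : ℂ) := by
      funext k
      simp only [Function.comp_apply, φ, LinearMap.coe_comp, LinearMap.applyₗ_apply_apply,
        AlgHom.toLinearMap_apply]
      exact mρ_basis k
    rw [this]
    exact hsing
  · -- spanning
    set S := Submodule.span ℂ (Set.range mBasisFam) with hS
    have h1 : (1 : MinusAlg) ∈ S := by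
      have : (1 : MinusAlg) = mBasisFam (Sum.inl (0, 0)) := by
        show (1 : MinusAlg) = (mY * mX) ^ 0 * mY ^ 0; simp
      rw [this]
      exact Submodule.subset_span (Set.mem_range_self _)
    have hXS : ∀ v ∈ S, mX * v ∈ S := by
      intro v hv
      have : S ≤ S.comap (LinearMap.mulLeft ℂ mX) := by
        rw [hS, Submodule.span_le]
        rintro _ ⟨k, rfl⟩
        rw [SetLike.mem_coe, Submodule.mem_comap, LinearMap.mulLeft_apply, mX_basis]
        exact Submodule.subset_span (Set.mem_range_self _)
      exact this hv
    have hYS : ∀ v ∈ S, mY * v ∈ S := by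
      intro v hv
      have : S ≤ S.comap (LinearMap.mulLeft ℂ mY) := by
        rw [hS, Submodule.span_le]
        rintro _ ⟨k, rfl⟩
        rw [SetLike.mem_coe, Submodule.mem_comap, LinearMap.mulLeft_apply, mY_basis]
        exact Submodule.subset_span (Set.mem_range_self _)
      exact this hv
    have key : ∀ a : MinusAlg, ∀ v ∈ S, a * v ∈ S := by
      intro a
      obtain ⟨b, rfl⟩ := RingQuot.mkAlgHom_surjective ℂ MinusRel a
      induction b using FreeAlgebra.induction with
      | grade0 r =>
        intro v hv
        rw [AlgHom.commutes, ← Algebra.smul_def]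
        exact S.smul_mem r hv
      | grade1 i =>
        fin_cases i
        · intro v hv; exact hXS v hv
        · intro v hv; exact hYS v hv
      | mul a b ha hb =>
        intro v hv
        rw [map_mul, mul_assoc]
        exact ha _ (hb v hv)
      | add a b ha hb =>
        intro v hv
        rw [map_add, add_mul]
        exact Submodule.add_mem S (ha v hv) (hb v hv)
    rw [Submodule.eq_top_iff']
    intro a
    have := key a 1 h1
    rwa [mul_one] at this
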